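/- arXiv:2603.16071 — 4 statements merged into one kernel-verified Lean document; each statement's English description precedes it below -/
import Mathlib

section
/- Let Φ_a = ⟨φ_1, Tcf_{i_0}, Tcf_{i_1}, Tcf_{i_2}, φ_2, Tcf_{i_3}, Tcf_{i_4}, φ_3⟩ and Φ_b = ⟨φ_1, Tcf_{i_0}, Tcf_{i_2}, φ_2, Tcf_{i_3}, Tcf_{i_1}, Tcf_{i_4}, φ_3⟩ be two orderings of the same aircraft, where the subsequences φ_1, φ_2, φ_3 contain m_1, m_2, m_3 aircraft respectively. Suppose that in both Φ_a and Φ_b each aircraft other than the first is relevant to its leading aircraft, the first aircraft is the same and operates at the same time in both sequences, P_i > t_0 for all i, and every aircraft is delayed in both sequences: S_i(Φ_a) > P_i and S_i(Φ_b) > P_i for all i. Then F(Φ_a) − F(Φ_b) = S_{i_1}(Φ_a) − S_{i_1}(Φ_b) + D_1·(m_2 + 2) + D_2·(m_3 + 1), where D_1 = Y_{i_0 i_1} + Y_{i_1 i_2} − Y_{i_0 i_2} and D_2 = Y_{i_0 i_1} + Y_{i_1 i_2} + Y_{i_3 i_4} − Y_{i_0 i_2} − Y_{i_3 i_1} − Y_{i_1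 i_4}. -/
/-!
Since every aircraft is delayed, `F(φ) = Σ (S_i - P_i)`, and since `Φa` and `Φb` order the same
aircraft, `F(Φa) - F(Φb) = Σ_i (S_i(Φa) - S_i(Φb))`. Along a block of aircraft that is consecutive
in both sequences, the relevance equations `S_l = S_k + Y_kl` carry the difference
`S(Φa) - S(Φb)` along unchanged. It is therefore `0` on `φ1, i0` (common first aircraft), `D1` on
the `m2 + 2` aircraft `i2, φ2, i3`, and `D2` on the `m3 + 1` aircraft `i4, φ3`; the moved
aircraft `i1` contributes `S_{i1}(Φa) - S_{i1}(Φb)`.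
-/

noncomputable section

/-- Total delay of the aircraft in the list `l` (an ordering of the aircraft),
where `S x` is the rescheduled operation time of aircraft `x` in this sequence and
`P x` is its scheduled operation time: `F(φ) = Σ_i max (S_i - P_i) 0`. -/
def totalDelay (S P : ℕ → ℝ) (l : List ℕ) : ℝ :=
  (l.map (fun x => max (S x - P x) 0)).sum

theorem List.IsChain.sub_eq_sub_head {α G : Type*} [AddCommGroup G] {Y : α → α → G}
    {Sa Sb : α → G} {a : α} {l : List α}
    (ha : (a :: l).IsChain fun k m => Sa m = Sa k + Y k m)
    (hb : (a :: l).IsChain fun k m => Sb m = Sb k + Y k m) :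
    ∀ x ∈ a :: l, Sa x - Sb x = Sa a - Sb a := by
  induction l generalizing a with
  | nil => simp
  | cons b l ih =>
    rw [List.isChain_cons_cons] at ha hb
    have hab : Sa b - Sb b = Sa a - Sb a := by rw [ha.1, hb.1]; abel
    rintro x (_ | ⟨_, hx⟩)
    · rfl
    · rw [ih ha.2 hb.2 x hx, hab]

theorem totalDelay_eq_sum_sub {S P : ℕ → ℝ} {l : List ℕ} (h : ∀ x ∈ l, P x ≤ S x) :
    totalDelay S P l = (l.map fun x => S x - P x).sum :=
  congrArg List.sum <| List.map_congr_left fun x hx => max_eq_left (sub_nonneg.2 (h x hx))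

theorem totalDelay_sub_totalDelay_of_perm {Sa Sb P : ℕ → ℝ} {l l' : List ℕ} (hl : l.Perm l')
    (ha : ∀ x ∈ l, P x ≤ Sa x) (hb : ∀ x ∈ l', P x ≤ Sb x) :
    totalDelay Sa P l - totalDelay Sb P l' = (l.map fun x => Sa x - Sb x).sum := by
  rw [totalDelay_eq_sum_sub ha, totalDelay_eq_sum_sub hb, ← (hl.map _).sum_eq,
    sub_eq_iff_eq_add, ← List.sum_map_add]
  simp only [sub_add_sub_cancel]

theorem sum_map_sub_after_moving_one {α G : Type*} [AddCommGroup G] {Y : α → α → G}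
    {Sa Sb : α → G} {φ1 φ2 φ3 : List α} {i0 i1 i2 i3 i4 : α}
    (ha : (φ1 ++ [i0, i1, i2] ++ φ2 ++ [i3, i4] ++ φ3).IsChain fun k m => Sa m = Sa k + Y k m)
    (hb : (φ1 ++ [i0, i2] ++ φ2 ++ [i3, i1, i4] ++ φ3).IsChain fun k m => Sb m = Sb k + Y k m)
    (hfirst : ∀ z, (φ1 ++ [i0, i1, i2] ++ φ2 ++ [i3, i4] ++ φ3).head? = some z → Sa z = Sb z) :
    ((φ1 ++ [i0, i1, i2] ++ φ2 ++ [i3, i4] ++ φ3).map fun x => Sa x - Sb x).sum =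
      Sa i1 - Sb i1 + (φ2.length + 2) • (Y i0 i1 + Y i1 i2 - Y i0 i2)
        + (φ3.length + 1) • (Y i0 i1 + Y i1 i2 + Y i3 i4 - Y i0 i2 - Y i3 i1 - Y i1 i4) := by
  simp only [List.append_assoc, List.cons_append, List.nil_append,
    List.isChain_append_cons_cons, List.isChain_cons_cons, List.isChain_cons_append_cons_cons]
    at ha hb
  obtain ⟨hAa, h01, h12, hMa, h34, hTa⟩ := ha
  obtain ⟨hAb, h02, hMb, h31, h14, hTb⟩ := hb
  obtain ⟨c, t, hct⟩ := List.exists_cons_of_ne_nil (List.concat_ne_nil i0 φ1)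
  have hc : Sa c = Sb c := hfirst c (by simpa using congrArg List.head? hct)
  have hA : ∀ x ∈ φ1 ++ [i0], Sa x - Sb x = 0 := by
    rw [hct] at hAa hAb ⊢
    simpa [hc] using hAa.sub_eq_sub_head hAb
  have hi0 : Sa i0 = Sb i0 := sub_eq_zero.1 (hA i0 (by simp))
  have hM : ∀ x ∈ i2 :: (φ2 ++ [i3]), Sa x - Sb x = Y i0 i1 + Y i1 i2 - Y i0 i2 := fun x hx =>
    (hMa.sub_eq_sub_head hMb x hx).trans (by rw [h12, h01, h02, hi0]; abel)
  have hi3 : Sa i3 = Y i0 i1 + Y i1 i2 - Y i0 i2 + Sb i3 := sub_eq_iff_eq_add.1 (hM i3 (by simp))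
  have hT : ∀ x ∈ i4 :: φ3,
      Sa x - Sb x = Y i0 i1 + Y i1 i2 + Y i3 i4 - Y i0 i2 - Y i3 i1 - Y i1 i4 := fun x hx =>
    (hTa.sub_eq_sub_head hTb x hx).trans (by rw [h34, h14, h31, hi3]; abel)
  have hsplit : ((φ1 ++ [i0, i1, i2] ++ φ2 ++ [i3, i4] ++ φ3).map fun x => Sa x - Sb x).sum =
      ((φ1 ++ [i0]).map fun x => Sa x - Sb x).sum + (Sa i1 - Sb i1)
        + ((i2 :: (φ2 ++ [i3])).map fun x => Sa x - Sb x).sum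
        + ((i4 :: φ3).map fun x => Sa x - Sb x).sum := by
    simp only [List.map_append, List.map_cons, List.sum_append, List.sum_cons, List.map_nil,
      List.sum_nil]
    abel
  rw [hsplit, List.sum_eq_card_nsmul _ _ (List.forall_mem_map.2 hA),
    List.sum_eq_card_nsmul _ _ (List.forall_mem_map.2 hM),
    List.sum_eq_card_nsmul _ _ (List.forall_mem_map.2 hT), nsmul_zero, zero_add]
  simp only [List.length_map, List.length_cons, List.length_append, List.length_nil]

theorem delay_difference_after_moving_one_aircraft_general
    (Y : ℕ → ℕ → ℝ) (P Sa Sb : ℕ → ℝ)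
    (φ1 φ2 φ3 : List ℕ) (i0 i1 i2 i3 i4 : ℕ)
    (Φa Φb : List ℕ)
    (hΦa : Φa = φ1 ++ [i0, i1, i2] ++ φ2 ++ [i3, i4] ++ φ3)
    (hΦb : Φb = φ1 ++ [i0, i2] ++ φ2 ++ [i3, i1, i4] ++ φ3)
    (hchaina : Φa.Chain' (fun k l => Sa l = Sa k + Y k l))
    (hchainb : Φb.Chain' (fun k l => Sb l = Sb k + Y k l))
    (hfirst : ∀ z, Φa.head? = some z → Sa z = Sb z)
    (hdelaya : ∀ z ∈ Φa, P z < Sa z)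
    (hdelayb : ∀ z ∈ Φb, P z < Sb z) :
    totalDelay Sa P Φa - totalDelay Sb P Φb =
      Sa i1 - Sb i1
        + (Y i0 i1 + Y i1 i2 - Y i0 i2) * ((φ2.length : ℝ) + 2)
        + (Y i0 i1 + Y i1 i2 + Y i3 i4 - Y i0 i2 - Y i3 i1 - Y i1 i4)
          * ((φ3.length : ℝ) + 1) := by
  have hperm : Φa.Perm Φb := by
    simpa [hΦa, hΦb, List.perm_append_left_iff] using
      (List.perm_middle (a := i1) (l₁ := i2 :: (φ2 ++ [i3])) (l₂ := i4 :: φ3)).symm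
  rw [totalDelay_sub_totalDelay_of_perm hperm (fun z hz => (hdelaya z hz).le)
    (fun z hz => (hdelayb z hz).le)]
  subst hΦa hΦb
  rw [sum_map_sub_after_moving_one hchaina hchainb hfirst]
  push_cast [nsmul_eq_mul]
  ring

/-- Theorem 3(1) of the paper.  `Φa = ⟨φ1, i0, i1, i2, φ2, i3, i4, φ3⟩` and
`Φb = ⟨φ1, i0, i2, φ2, i3, i1, i4, φ3⟩` are two orderings of the same aircraft; in both, each
aircraft other than the first is relevant to its leading aircraft
(`S l = S k + Y k l` for consecutive aircraft), the common first aircraft operates at the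
same time in both sequences, `P z > t0` for all aircraft, and every aircraft is delayed in
both sequences.  Then
`F(Φa) − F(Φb) = S_{i1}(Φa) − S_{i1}(Φb) + D1·(m2+2) + D2·(m3+1)` with
`D1 = Y i0 i1 + Y i1 i2 − Y i0 i2` and
`D2 = Y i0 i1 + Y i1 i2 + Y i3 i4 − Y i0 i2 − Y i3 i1 − Y i1 i4`. -/
theorem delay_difference_after_moving_one_aircraft
    (Y : ℕ → ℕ → ℝ) (P Sa Sb : ℕ → ℝ) (t0 : ℝ)
    (φ1 φ2 φ3 : List ℕ) (i0 i1 i2 i3 i4 : ℕ)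
    (Φa Φb : List ℕ)
    (hΦa : Φa = φ1 ++ [i0, i1, i2] ++ φ2 ++ [i3, i4] ++ φ3)
    (hΦb : Φb = φ1 ++ [i0, i2] ++ φ2 ++ [i3, i1, i4] ++ φ3)
    (hnodup : Φa.Nodup)
    (hchaina : Φa.Chain' (fun k l => Sa l = Sa k + Y k l))
    (hchainb : Φb.Chain' (fun k l => Sb l = Sb k + Y k l))
    (hfirst : ∀ z, Φa.head? = some z → Sa z = Sb z)
    (hP : ∀ z ∈ Φa, t0 < P z)
    (hdelaya : ∀ z ∈ Φa, P z < Sa z)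
    (hdelayb : ∀ z ∈ Φb, P z < Sb z) :
    totalDelay Sa P Φa - totalDelay Sb P Φb =
      Sa i1 - Sb i1
        + (Y i0 i1 + Y i1 i2 - Y i0 i2) * ((φ2.length : ℝ) + 2)
        + (Y i0 i1 + Y i1 i2 + Y i3 i4 - Y i0 i2 - Y i3 i1 - Y i1 i4)
          * ((φ3.length : ℝ) + 1) :=
  delay_difference_after_moving_one_aircraft_general Y P Sa Sb φ1 φ2 φ3 i0 i1 i2 i3 i4 Φa Φb hΦa hΦb
    hchaina hchainb hfirst hdelaya hdelayb
end
end

section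
/- Consider a class-monotonically-decreasing landing sequence Φ_a = ⟨Tcf_1, …, Tcf_n⟩ in which each aircraft other than the first is relevant to its leading aircraft, and suppose that in every sequence φ of these aircraft under consideration every aircraft is delayed: S_i(φ) > P_i > 0 for all i. Let E_1 = Y_{12} and E_i = Y_{(i−1)i} + Y_{i(i+1)} − Y_{(i−1)(i+1)} for i ∈ {2, …, n−1}. Generate a new sequence Φ_b by moving aircraft Tcf_{j_0} to be between Tcf_{k_0} and Tcf_{k_0+1} for some j_0 < k_0, keeping all other relative orders, where in Φ_b each aircraft other than the first is relevant to its leading aircraft and the operation time of the first aircraft is unchanged. If E_{j_0} = T_0, then F(Φ_b) ≥ F(Φ_a). -/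
noncomputable section

/-- The paper's landing separation assumptions (Assumptions 1-4), with classes `1,…,η`,
`ρ₁ = 3`, `ρ₂ = 5`: `T i j` is the minimum landing separation time between a leading
aircraft of class `i` and a trailing aircraft of class `j`. -/
structure LandingAssumptions (η : ℕ) (T : ℕ → ℕ → ℝ) (T0 δ : ℝ) : Prop where
  T0_pos : 0 < T0
  delta_lb : T0 / 8 < δ
  delta_ub : δ < T0 / 6
  eta_ge : 6 ≤ η
  diag12 : ∀ i, i = 1 ∨ i = 2 → T i i = 1.5 * T0
  diag35 : ∀ i, i = 3 ∨ i = 5 → T i i = T0 + δ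
  diag_other : ∀ i, 1 ≤ i → i ≤ η → i ≠ 1 → i ≠ 2 → i ≠ 3 → i ≠ 5 → T i i = T0
  T21 : T 2 1 = 1.5 * T0
  lower : ∀ i j, 1 ≤ j → j < i → i ≤ η → i ≠ 2 → T i j = T0
  mono : ∀ i k j, 1 ≤ i → i < k → k < j → j ≤ η →
    T i k ≤ T i j ∧ T i j ≤ 3 * T0 ∧ T k j < T i j
  tri : ∀ k j i, 1 ≤ k → k ≤ j → j ≤ i → i ≤ η →
    T i k < T i j + T j k ∧ T k i < T j i + T k j
  succ45 : T 4 5 = T0 + δ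
  succ_other : ∀ k, 2 ≤ k → k ≤ η → k ≠ 5 → 1.5 * T0 ≤ T (k - 1) k
  dec : ∀ i k, 2 ≤ i → i ≤ k → k ≤ η → ¬(i = 5 ∧ k = 5) → 2 * δ < T (i - 1) k - T i k
  T12 : 2 * T0 < T 1 2
  T23 : 1.5 * T0 + 2 * δ < T 2 3
  row1 : ∀ h j, 3 ≤ h → h ≤ j → j ≤ η → 0.5 * T0 < T 1 j - T h j
  row2E1 : 0.5 * T0 - δ ≤ T 2 4 - T 3 4 ∧ T 2 4 - T 3 4 < 0.5 * T0
  row2E2 : 0.5 * T0 - δ ≤ T 2 η - T 3 η ∧ T 2 η - T 3 η < 0.5 * T0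
  row2notE : ∀ k j, 2 < k → k < j → j ≤ η → ¬(k = 3 ∧ j = 4) → ¬(k = 3 ∧ j = η) →
    0.5 * T0 < T 2 j - T k j

/-!
Taking `x` out lets every aircraft of `B ++ [y]` land exactly `E_{j0} = T0` earlier, a total gain
of `(|B| + 1) T0`. Reinserted after `y`, the aircraft `x` lands `Y y x - T0 ≥ 0` after the old
landing time of `y`, which was itself at least `(|B| + 1) T0` after the old landing time of `x`:
so `x` loses at least what the others gain. The aircraft of `A` keep their times, and those of
`C` are all shifted by `Y y x + Y x c - Y y c - T0 ≥ 0` (`c` the first aircraft of `C`), by the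
separation inequality `T0 + T j k ≤ T j i + T i k` for classes `k ≤ j ≤ i`. As every aircraft is
delayed, the total delay is the sum of the landing times minus a constant.
-/

namespace LandingAssumptions

variable {η : ℕ} {T : ℕ → ℕ → ℝ} {T0 δ : ℝ}

lemma delta_pos (hL : LandingAssumptions η T T0 δ) : 0 < δ := by
  linarith [hL.T0_pos, hL.delta_lb]

lemma diag_mem_Icc_of_three_le (hL : LandingAssumptions η T T0 δ) {j : ℕ} (h3 : 3 ≤ j)
    (hη : j ≤ η) : T j j ∈ Set.Icc T0 (T0 + δ) := by
  have hδ := hL.delta_pos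
  by_cases h35 : j = 3 ∨ j = 5
  · rw [hL.diag35 j h35]
    constructor <;> linarith
  · rw [not_or] at h35
    rw [hL.diag_other j (by omega) hη (by omega) (by omega) h35.1 h35.2]
    constructor <;> linarith

lemma T0_le_diag (hL : LandingAssumptions η T T0 δ) {j : ℕ} (h1 : 1 ≤ j) (hη : j ≤ η) :
    T0 ≤ T j j := by
  by_cases h12 : j = 1 ∨ j = 2
  · rw [hL.diag12 j h12]
    linarith [hL.T0_pos]
  · exact (hL.diag_mem_Icc_of_three_le (by omega) hη).1

lemma diag_le_succ (hL : LandingAssumptions η T T0 δ) {j : ℕ} (h1 : 1 ≤ j) (hη : j + 1 ≤ η) :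
    T j j ≤ T j (j + 1) := by
  have hT0 := hL.T0_pos
  have hδ := hL.delta_ub
  obtain rfl | rfl | h3 : j = 1 ∨ j = 2 ∨ 3 ≤ j := by omega
  · rw [hL.diag12 1 (Or.inl rfl)]
    linarith [hL.T12]
  · rw [hL.diag12 2 (Or.inr rfl)]
    linarith [hL.T23, hL.delta_pos]
  · have hsucc : T0 + δ ≤ T j (j + 1) := by
      by_cases h4 : j = 4
      · subst h4
        exact hL.succ45.ge
      · have h := hL.succ_other (j + 1) (by omega) hη (by omega)
        rw [Nat.add_sub_cancel] at h
        linarith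
    exact (hL.diag_mem_Icc_of_three_le h3 (by omega)).2.trans hsucc

lemma diag_le (hL : LandingAssumptions η T T0 δ) {j i : ℕ} (h1 : 1 ≤ j) (hji : j ≤ i)
    (hη : i ≤ η) : T j j ≤ T j i := by
  obtain rfl | hlt := hji.eq_or_lt
  · exact le_rfl
  obtain rfl | hlt' := (Nat.succ_le_of_lt hlt).eq_or_lt
  · exact hL.diag_le_succ h1 hη
  · exact (hL.diag_le_succ h1 (by omega)).trans (hL.mono j (j + 1) i h1 (by omega) hlt' hη).1

lemma T0_le (hL : LandingAssumptions η T T0 δ) {i j : ℕ} (hi : 1 ≤ i) (hiη : i ≤ η)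
    (hj : 1 ≤ j) (hjη : j ≤ η) : T0 ≤ T i j := by
  rcases le_or_gt i j with hij | hji
  · exact (hL.T0_le_diag hi hiη).trans (hL.diag_le hi hij hjη)
  · by_cases hi2 : i = 2
    · obtain rfl : j = 1 := by omega
      rw [hi2, hL.T21]
      linarith [hL.T0_pos]
    · exact (hL.lower i j hj hji hiη hi2).ge

lemma three_halves_T0_le_T2 (hL : LandingAssumptions η T T0 δ) {i : ℕ} (h3 : 3 ≤ i)
    (hη : i ≤ η) : 1.5 * T0 ≤ T 2 i := by
  have h23 : 1.5 * T0 ≤ T 2 3 := by linarith [hL.T23, hL.delta_pos]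
  obtain rfl | h := h3.eq_or_lt
  · exact h23
  · exact h23.trans (hL.mono 2 3 i (by omega) (by omega) h hη).1

lemma T0_add_le_add (hL : LandingAssumptions η T T0 δ) {k j i : ℕ} (hk : 1 ≤ k) (hkj : k ≤ j)
    (hji : j ≤ i) (hη : i ≤ η) : T0 + T j k ≤ T j i + T i k := by
  have hT0 := hL.T0_pos
  obtain rfl | hji := hji.eq_or_lt
  · linarith [hL.T0_le_diag (hk.trans hkj) hη]
  obtain rfl | hkj := hkj.eq_or_lt
  · by_cases hi2 : i = 2
    · subst hi2
      obtain rfl : k = 1 := by omega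
      rw [hL.T21, hL.diag12 1 (Or.inl rfl)]
      linarith [hL.T12]
    · rw [hL.lower i k hk hji hη hi2]
      linarith [hL.diag_le hk hji.le hη]
  · by_cases hj2 : j = 2
    · subst hj2
      obtain rfl : k = 1 := by omega
      rw [hL.T21, hL.lower i 1 le_rfl (by omega) hη (by omega)]
      linarith [hL.three_halves_T0_le_T2 (i := i) (by omega) hη]
    · rw [hL.lower j k hk hkj (by omega) hj2]
      linarith [hL.T0_le (j := k) (by omega) hη hk (by omega),
        hL.T0_le (hk.trans hkj.le) (by omega) (by omega) hη]

end LandingAssumptions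

lemma totalDelay_add_sum_eq {S P : ℕ → ℝ} {l : List ℕ} (h : ∀ z ∈ l, P z ≤ S z) :
    totalDelay S P l + (l.map P).sum = (l.map S).sum := by
  rw [totalDelay, ← List.sum_map_add]
  congr 1
  refine List.map_congr_left fun z hz => ?_
  rw [max_eq_left (sub_nonneg.2 (h z hz)), sub_add_cancel]

section Sequences

variable {α : Type*}

lemma sum_map_eq_sum_map_add_length_mul {f g : α → ℝ} {d : ℝ} {l : List α}
    (h : ∀ z ∈ l, g z = f z + d) : (l.map g).sum = (l.map f).sum + l.length * d := by
  rw [List.map_congr_left h, List.sum_map_add]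
  simp

def RelevantChain (S : α → ℝ) (Y : α → α → ℝ) (l : List α) : Prop :=
  l.IsChain fun u v => S v = S u + Y u v

/-- The paper's `E_{j0}` for `x = Tcf_{j0}` preceded by `A` and followed by `m`; `A = []` is the
case `j0 = 1`. -/
def removalSaving [Inhabited α] (Y : α → α → ℝ) (A : List α) (x m : α) : ℝ :=
  if A = [] then Y x m else Y A.getLastI x + Y x m - Y A.getLastI m

namespace RelevantChain

variable {S S' : α → ℝ} {Y : α → α → ℝ}

lemma sub_eq_sub_head {l : List α} (h : RelevantChain S Y l) (h' : RelevantChain S' Y l) :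
    ∀ a ∈ l.head?, ∀ z ∈ l, S' z - S z = S' a - S a := by
  let R : α → α → Prop := fun u v => S' v - S v = S' u - S u
  have hR : l.IsChain R := by
    induction h with
    | nil => exact .nil
    | singleton a => exact .singleton a
    | cons_cons hab _ ih =>
      rw [RelevantChain, List.isChain_cons_cons] at h'
      refine .cons_cons ?_ (ih h'.2)
      simp only [R, hab, h'.1]
      ring
  have : Trans R R R := ⟨fun h₁ h₂ => h₂.trans h₁⟩
  intro a ha z hz
  cases l with
  | nil => simp at ha
  | cons b t =>
    obtain rfl : b = a := Option.some_inj.1 ha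
    rcases List.mem_cons.1 hz with rfl | hz
    · rfl
    · exact (List.pairwise_cons.1 hR.pairwise).1 z hz

lemma add_length_mul_le_of_mem_getLast? {c : ℝ} {a : α} {l : List α}
    (h : RelevantChain S Y (a :: l)) (hY : ∀ u ∈ a :: l, ∀ v ∈ a :: l, c ≤ Y u v) :
    ∀ b ∈ (a :: l).getLast?, S a + l.length * c ≤ S b := by
  induction l generalizing a with
  | nil => simp
  | cons b t ih =>
    intro z hz
    obtain ⟨hab, hbt⟩ := List.isChain_cons_cons.1 h
    have ih' := ih hbt (fun u hu v hv =>
      hY u (List.mem_cons_of_mem a hu) v (List.mem_cons_of_mem a hv)) z (by simpa using hz)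
    have hc := hY a List.mem_cons_self b (List.mem_cons_of_mem a List.mem_cons_self)
    push_cast [List.length_cons]
    linarith

lemma eq_of_mem_prefix {A l l' : List α} (h : RelevantChain S Y (A ++ l))
    (h' : RelevantChain S' Y (A ++ l')) (hstart : ∀ a ∈ A.head?, S' a = S a) :
    ∀ z ∈ A, S' z = S z := by
  intro z hz
  obtain ⟨a, ha⟩ := Option.isSome_iff_exists.1 (List.isSome_head?.2 (List.ne_nil_of_mem hz))
  have hshift := sub_eq_sub_head (List.IsChain.left_of_append h)
    (List.IsChain.left_of_append h') a ha z hz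
  linarith [hstart a ha]

lemma eq_sub_removalSaving [Inhabited α] {A L L' : List α} {x m : α}
    (h : RelevantChain S Y (A ++ x :: m :: L)) (h' : RelevantChain S' Y (A ++ m :: L'))
    (hA : ∀ z ∈ A, S' z = S z) (hstart : A = [] → S' m = S x) :
    S' m = S m - removalSaving Y A x m := by
  rcases List.eq_nil_or_concat A with rfl | ⟨A', g, rfl⟩
  · have hxm := (List.isChain_cons_cons.1 h).1
    rw [removalSaving, if_pos rfl, hstart rfl, hxm]
    ring
  · rw [List.concat_eq_append, List.append_assoc, List.singleton_append] at h h'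
    rw [RelevantChain, List.isChain_append_cons_cons, List.isChain_cons_cons] at h
    rw [RelevantChain, List.isChain_append_cons_cons] at h'
    rw [removalSaving, if_neg (by simp), List.getLastI_eq_getLast?_getD, List.concat_eq_append,
      List.getLast?_concat, Option.getD_some, h'.2.1, h.2.2.1, h.2.1,
      hA g (by simp)]
    ring

lemma le_of_mem_suffix {C : List α} {x y : α} {c : ℝ}
    (h : RelevantChain S Y (y :: C)) (h' : RelevantChain S' Y (y :: x :: C))
    (hy : S y ≤ S' y + c) (htri : ∀ z ∈ C.head?, c + Y y z ≤ Y y x + Y x z) :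
    ∀ z ∈ C, S z ≤ S' z := by
  cases C with
  | nil => simp
  | cons w t =>
    intro z hz
    obtain ⟨hyw, hwt⟩ := List.isChain_cons_cons.1 h
    obtain ⟨hyx, hxwt⟩ := List.isChain_cons_cons.1 h'
    obtain ⟨hxw, hwt'⟩ := List.isChain_cons_cons.1 hxwt
    have hshift := sub_eq_sub_head hwt hwt' w rfl z hz
    linarith [htri w rfl]

end RelevantChain

theorem sum_map_le_sum_map_of_moveForward [Inhabited α] {Sa Sb : α → ℝ} {Y : α → α → ℝ}
    {c t0 : ℝ} {A B C : List α} {x y : α}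
    (ha : RelevantChain Sa Y (A ++ [x] ++ B ++ [y] ++ C))
    (hb : RelevantChain Sb Y (A ++ B ++ [y, x] ++ C))
    (hstarta : ∀ z ∈ (A ++ [x] ++ B ++ [y] ++ C).head?, Sa z = t0)
    (hstartb : ∀ z ∈ (A ++ B ++ [y, x] ++ C).head?, Sb z = t0)
    (hE : removalSaving Y A x (B ++ [y]).headI ≤ c)
    (hsep : ∀ u ∈ x :: (B ++ [y]), ∀ v ∈ x :: (B ++ [y]), c ≤ Y u v)
    (htri : ∀ z ∈ C.head?, c + Y y z ≤ Y y x + Y x z) :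
    ((A ++ [x] ++ B ++ [y] ++ C).map Sa).sum ≤ ((A ++ B ++ [y, x] ++ C).map Sb).sum := by
  obtain ⟨m, M, hBy⟩ : ∃ m M, B ++ [y] = m :: M := by cases B <;> simp
  have eΦa : A ++ [x] ++ B ++ [y] ++ C = A ++ x :: (m :: M ++ C) := by rw [← hBy]; simp
  have eΦb : A ++ B ++ [y, x] ++ C = A ++ (m :: M ++ x :: C) := by rw [← hBy]; simp
  rw [eΦa] at ha hstarta ⊢
  rw [eΦb] at hb hstartb ⊢
  rw [hBy] at hE hsep
  have hA : ∀ z ∈ A, Sb z = Sa z := by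
    refine ha.eq_of_mem_prefix hb fun a hA => ?_
    rw [Option.mem_def] at hA
    rw [hstarta a, hstartb a] <;> simp [List.head?_append, hA]
  set E := removalSaving Y A x m
  have hm : Sb m = Sa m - E := ha.eq_sub_removalSaving hb hA fun hA0 => by
    rw [hstarta x, hstartb m] <;> simp [hA0]
  have hM : ∀ z ∈ m :: M, Sb z = Sa z + -E := by
    intro z hz
    have := RelevantChain.sub_eq_sub_head (ha.infix ⟨A ++ [x], C, by simp⟩)
      (hb.infix ⟨A, x :: C, by simp⟩) m rfl z hz
    linarith
  have hxy : Sa x + (M.length + 1) * c ≤ Sa y := by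
    have := RelevantChain.add_length_mul_le_of_mem_getLast? (ha.infix ⟨A, C, by simp⟩) hsep y
      (by rw [← hBy, ← List.cons_append, List.getLast?_concat]; rfl)
    simpa using this
  have hEc : E ≤ c := hE
  have hy : Sb y = Sa y + -E := hM y (by simp [← hBy])
  have hbyxC : RelevantChain Sb Y (y :: x :: C) := hb.infix ⟨A ++ B, [], by simp [← hBy]⟩
  have hC : ∀ z ∈ C, Sa z ≤ Sb z :=
    RelevantChain.le_of_mem_suffix (ha.infix ⟨A ++ x :: B, [], by simp [← hBy]⟩) hbyxC
      (by linarith) htri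
  have hx : Sb x = Sb y + Y y x := (List.isChain_cons_cons.1 hbyxC).1
  have hyx : c ≤ Y y x := hsep y (by simp [← hBy]) x List.mem_cons_self
  have hsumA : (A.map Sb).sum = (A.map Sa).sum := congrArg List.sum (List.map_congr_left hA)
  have hsumM := sum_map_eq_sum_map_add_length_mul hM
  have hsumC := List.sum_le_sum hC
  have hgain : (M.length + 1) * E ≤ (M.length + 1) * c := by gcongr
  simp only [List.map_append, List.map_cons, List.sum_append, List.sum_cons,
    List.length_cons, Nat.cast_succ] at hsumM ⊢
  linarith

end Sequences

theorem moving_forward_in_monotone_landing_sequence_general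
    (η : ℕ) (T : ℕ → ℕ → ℝ) (T0 δ t0 : ℝ)
    (hL : LandingAssumptions η T T0 δ)
    (cl : ℕ → ℕ) (P Sa Sb : ℕ → ℝ)
    (Y : ℕ → ℕ → ℝ) (hY : ∀ u v, Y u v = T (cl u) (cl v))
    (A B C : List ℕ) (x y : ℕ)
    (Φa Φb : List ℕ)
    (hΦa : Φa = A ++ [x] ++ B ++ [y] ++ C)
    (hΦb : Φb = A ++ B ++ [y, x] ++ C)
    (hclrange : ∀ z ∈ Φa, 1 ≤ cl z ∧ cl z ≤ η)
    (hdecr : Φa.Chain' (fun u v => cl v ≤ cl u))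
    (hchaina : Φa.Chain' (fun u v => Sa v = Sa u + Y u v))
    (hchainb : Φb.Chain' (fun u v => Sb v = Sb u + Y u v))
    (hstarta : ∀ z, Φa.head? = some z → Sa z = t0)
    (hstartb : ∀ z, Φb.head? = some z → Sb z = t0)
    (hdelay : ∀ z ∈ Φa, 0 < P z ∧ P z < Sa z ∧ P z < Sb z)
    (hE : (if A = [] then Y x ((B ++ [y]).headI)
           else Y A.getLastI x + Y x ((B ++ [y]).headI)
             - Y A.getLastI ((B ++ [y]).headI)) = T0) :
    totalDelay Sa P Φa ≤ totalDelay Sb P Φb := by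
  have hperm : Φa.Perm Φb := by
    rw [hΦa, hΦb]
    simpa using ((List.perm_append_comm (l₁ := [x]) (l₂ := B ++ [y])).append_left A).append_right C
  have hTa := totalDelay_add_sum_eq fun z hz => (hdelay z hz).2.1.le
  have hTb := totalDelay_add_sum_eq fun z hz => (hdelay z (hperm.mem_iff.2 hz)).2.2.le
  have : Trans (fun u v => cl v ≤ cl u) (fun u v => cl v ≤ cl u) (fun u v => cl v ≤ cl u) :=
    ⟨fun h₁ h₂ => h₂.trans h₁⟩
  have hsum : (Φa.map Sa).sum ≤ (Φb.map Sb).sum := by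
    subst hΦa hΦb
    refine sum_map_le_sum_map_of_moveForward hchaina hchainb hstarta hstartb hE.le
      (fun u hu v hv => ?_) fun z hz => ?_
    · have hsub : List.Sublist (x :: (B ++ [y])) (A ++ [x] ++ B ++ [y] ++ C) := by simp
      have hu' := hclrange u (hsub.subset hu)
      have hv' := hclrange v (hsub.subset hv)
      rw [hY]
      exact hL.T0_le hu'.1 hu'.2 hv'.1 hv'.2
    · obtain ⟨C', rfl⟩ := List.head?_eq_some_iff.1 hz
      have hsub : List.Sublist [x, y, z] (A ++ [x] ++ B ++ [y] ++ z :: C') := by simp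
      have hcl := hdecr.pairwise.sublist hsub
      simp only [List.pairwise_cons] at hcl
      rw [hY, hY, hY]
      exact hL.T0_add_le_add (hclrange z (hsub.subset (by simp))).1 (hcl.2.1 z (by simp))
        (hcl.1 y (by simp)) (hclrange x (hsub.subset (by simp))).2
  linarith [(hperm.map P).sum_eq]

/-- Theorem 4(1) of the paper.  `Φa = ⟨A, x, B, y, C⟩` is a
class-monotonically-decreasing landing sequence (aircraft `x` is `Tcf_{j0}`, aircraft `y`
is `Tcf_{k0}` with `j0 < k0`), in which each aircraft other than the first is relevant to
its leading aircraft, and `Φb = ⟨A, B, y, x, C⟩` is obtained by moving `x = Tcf_{j0}` to be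
between `Tcf_{k0}` and `Tcf_{k0+1}`; both sequences start at time `t0` and every aircraft is
delayed in both (`S > P > 0`).  For landing aircraft `Y u v = T (cl u) (cl v)`.
If `E_{j0} = T0`, where `E_1 = Y_{12}` and
`E_i = Y_{(i−1)i} + Y_{i(i+1)} − Y_{(i−1)(i+1)}` for `i ≥ 2`, then `F(Φb) ≥ F(Φa)`. -/
theorem moving_forward_in_monotone_landing_sequence
    (η : ℕ) (T : ℕ → ℕ → ℝ) (T0 δ t0 : ℝ)
    (hL : LandingAssumptions η T T0 δ)
    (cl : ℕ → ℕ) (P Sa Sb : ℕ → ℝ)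
    (Y : ℕ → ℕ → ℝ) (hY : ∀ u v, Y u v = T (cl u) (cl v))
    (A B C : List ℕ) (x y : ℕ)
    (Φa Φb : List ℕ)
    (hΦa : Φa = A ++ [x] ++ B ++ [y] ++ C)
    (hΦb : Φb = A ++ B ++ [y, x] ++ C)
    (hnodup : Φa.Nodup)
    (hclrange : ∀ z ∈ Φa, 1 ≤ cl z ∧ cl z ≤ η)
    (hdecr : Φa.Chain' (fun u v => cl v ≤ cl u))
    (hchaina : Φa.Chain' (fun u v => Sa v = Sa u + Y u v))
    (hchainb : Φb.Chain' (fun u v => Sb v = Sb u + Y u v))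
    (hstarta : ∀ z, Φa.head? = some z → Sa z = t0)
    (hstartb : ∀ z, Φb.head? = some z → Sb z = t0)
    (hdelay : ∀ z ∈ Φa, 0 < P z ∧ P z < Sa z ∧ P z < Sb z)
    (hE : (if A = [] then Y x ((B ++ [y]).headI)
           else Y A.getLastI x + Y x ((B ++ [y]).headI)
             - Y A.getLastI ((B ++ [y]).headI)) = T0) :
    totalDelay Sa P Φa ≤ totalDelay Sb P Φb :=
  moving_forward_in_monotone_landing_sequence_general η T T0 δ t0 hL cl P Sa Sb Y hY A B C x y Φa Φb
    hΦa hΦb hclrange hdecr hchaina hchainb hstarta hstartb hdelay hE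
end
end

section
/- Consider a class-monotonically-decreasing landing sequence Φ_a = ⟨Tcf_1, …, Tcf_n⟩ in which each aircraft other than the first is relevant to its leading aircraft and the first aircraft operates at time t_0. Suppose that in every ordering φ of these aircraft with a feasible schedule every aircraft is delayed: S_i(φ) > P_i > 0 for all i, and suppose that Y_{k(k+1)} ≤ Y_{(k+1)(k+2)} for all k ∈ {1, …, n−2} (separations between consecutive aircraft of Φ_a are nondecreasing along the sequence). Then (Φ_a, Sr(Φ_a)) is an optimal solution of the total-delay minimization problem: F(Φ_a) ≤ F(φ, Sr(φ)) for every ordering φ of the same aircraft and every feasible schedule Sr(φ) (i.e., S_j(φ) − S_i(φ) ≥ Y_{ij} for all pairs i before j in φ, and S_i(φ) ≥ t_0 for all i). -/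
noncomputable section

/-! When every aircraft is delayed, the total delay of a feasible schedule is `∑ S - ∑ P`, and
`∑ P` does not depend on the ordering. In a feasible schedule of `φ` the `k`-th operation time is
at least `t0` plus the first `k - 1` consecutive separations, with equality for `Φa`; so it suffices
that every prefix sum of the consecutive separations of `Φa` is at most the corresponding one
of `φ`.

Being sorted along the class-decreasing sequence `Φa`, these separations take only two values:
`T0` and either `1.5 * T0` or `T0 + δ`. Prefix domination then reduces to counting separations
at the larger value. A separation `1.5 * T0` in `Φa` is led by an aircraft of class at most `2`;
since the last aircraft of `Φa` has the smallest class, there are at most as many such leaders as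
aircraft of class at most `2` other than the last one of `φ`, and each of those leads a separation
of at least `1.5 * T0` in `φ`.
The separations `T0 + δ` in `Φa` join the aircraft of a single class `c ∈ {3, 5}` at its end, and
in any ordering all but one of the class-`c` aircraft are preceded by a separation of at least
`T0 + δ`. -/

open List

namespace LandingSequence

section Separations

variable {α β : Type*} {Y : α → α → β}

def separations (Y : α → α → β) (l : List α) : List β := zipWith Y l l.tail

@[simp] theorem separations_nil : separations Y [] = [] := rfl

@[simp] theorem separations_singleton (x : α) : separations Y [x] = [] := rfl

@[simp] theorem separations_cons_cons (x y : α) (l : List α) :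
    separations Y (x :: y :: l) = Y x y :: separations Y (y :: l) := rfl

@[simp] theorem length_separations (l : List α) : (separations Y l).length = l.length - 1 := by
  simp [separations]

theorem separations_map {γ : Type*} (f : α → γ) (T : γ → γ → β) (l : List α) :
    separations T (l.map f) = separations (fun u v => T (f u) (f v)) l := by
  rw [separations, separations, ← map_tail, zipWith_map]

theorem separations_replicate (n : ℕ) (a : α) :
    separations Y (replicate (n + 1) a) = replicate n (Y a a) := by
  induction n with
  | zero => rfl
  | succ n ih => rw [replicate_succ, replicate_succ, separations_cons_cons, ← replicate_succ, ih,
      replicate_succ]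

theorem forall_mem_separations_iff {p : β → Prop} :
    ∀ {l : List α}, (∀ s ∈ separations Y l, p s) ↔ l.IsChain (fun u v => p (Y u v))
  | [] | [_] => by simp
  | x :: y :: l => by simp [forall_mem_separations_iff (l := y :: l)]

theorem isChain_separations {R : β → β → Prop} :
    ∀ {l : List α}, (∀ A B u v w, l = A ++ [u, v, w] ++ B → R (Y u v) (Y v w)) →
      (separations Y l).IsChain R
  | [], _ | [_], _ | [_, _], _ => by simp
  | x :: y :: z :: l, h => by
    rw [separations_cons_cons, separations_cons_cons, isChain_cons_cons, ← separations_cons_cons]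
    exact ⟨h [] l x y z rfl,
      isChain_separations fun A B u v w e => h (x :: A) B u v w (by simp [e])⟩

variable (p : β → Prop) [DecidablePred p] {q : α → Prop} [DecidablePred q]

theorem countP_separations_le_countP_dropLast :
    ∀ {l : List α}, l.IsChain (fun u v => p (Y u v) → q u) →
      (separations Y l).countP p ≤ l.dropLast.countP q
  | [], _ | [_], _ => by simp
  | x :: y :: l, h => by
    rw [isChain_cons_cons] at h
    have ih := countP_separations_le_countP_dropLast h.2
    simp only [separations_cons_cons, dropLast_cons_cons, countP_cons, decide_eq_true_eq]
    by_cases hp : p (Y x y)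
    · rw [if_pos hp, if_pos (h.1 hp)]
      omega
    · rw [if_neg hp]
      split_ifs <;> omega

theorem countP_dropLast_le_countP_separations :
    ∀ {l : List α}, l.IsChain (fun u v => q u → p (Y u v)) →
      l.dropLast.countP q ≤ (separations Y l).countP p
  | [], _ | [_], _ => by simp
  | x :: y :: l, h => by
    rw [isChain_cons_cons] at h
    have ih := countP_dropLast_le_countP_separations h.2
    simp only [separations_cons_cons, dropLast_cons_cons, countP_cons, decide_eq_true_eq]
    by_cases hq : q x
    · rw [if_pos hq, if_pos (h.1 hq)]
      omega
    · rw [if_neg hq]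
      split_ifs <;> omega

-- A head below `c` has to climb to `c` first, which already costs one separation satisfying `p`.
theorem count_add_ite_le_countP_separations [LinearOrder α] (c : α) :
    ∀ {x : α} {l : List α}, (∀ u ∈ x :: l, ∀ v ∈ x :: l, u ≤ c → c ≤ v → p (Y u v)) →
      (x :: l).count c + (if x < c then 1 else 0) ≤ (separations Y (x :: l)).countP p + 1
  | x, [], _ => by
    rcases lt_trichotomy x c with hx | rfl | hx
    · simp [hx, hx.ne]
    · simp
    · simp [hx.ne', hx.not_gt]
  | x, y :: l, h => by
    have ih := count_add_ite_le_countP_separations c (x := y) (l := l)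
      fun u hu v hv => h u (mem_cons_of_mem x hu) v (mem_cons_of_mem x hv)
    have hxy : x ≤ c → c ≤ y → p (Y x y) := h x mem_cons_self y (by simp)
    have hx : (if x = c then 1 else 0) + (if x < c then 1 else 0) = if x ≤ c then 1 else 0 := by
      rcases lt_trichotomy x c with hx | rfl | hx
      · simp [hx, hx.ne, hx.le]
      · simp
      · simp [hx.ne', hx.not_gt, hx.not_ge]
    rw [count_cons, separations_cons_cons, countP_cons]
    simp only [beq_iff_eq, decide_eq_true_eq]
    rw [add_assoc, hx]
    by_cases hxc : x ≤ c
    · rw [if_pos hxc]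
      by_cases hyc : y < c
      · rw [if_pos hyc] at ih
        split_ifs <;> omega
      · rw [if_neg hyc] at ih
        rw [if_pos (hxy hxc (not_lt.1 hyc))]
        omega
    · rw [if_neg hxc]
      split_ifs at ih <;> omega

theorem count_le_countP_separations_add_one [LinearOrder α] (c : α) {l : List α}
    (h : ∀ u ∈ l, ∀ v ∈ l, u ≤ c → c ≤ v → p (Y u v)) :
    l.count c ≤ (separations Y l).countP p + 1 := by
  cases l with
  | nil => simp
  | cons x l =>
    have := count_add_ite_le_countP_separations p c h
    omega

end Separations

theorem countP_dropLast_le_of_perm {α : Type*} {q : α → Prop} [DecidablePred q] {l l' : List α}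
    (hl : l.Pairwise (fun u v => q u → q v)) (hperm : l ~ l') :
    l.dropLast.countP q ≤ l'.dropLast.countP q := by
  rcases eq_or_ne l [] with rfl | hne
  · simp
  have hne' : l' ≠ [] := by rintro rfl; exact hne (perm_nil.1 hperm)
  have hsplit := dropLast_append_getLast hne
  by_cases hlast : q (l.getLast hne)
  · have h1 := congrArg (countP q) hsplit
    have h2 := congrArg (countP q) (dropLast_append_getLast hne')
    have hq1 : countP q [l.getLast hne] = 1 := countP_eq_length.2 (by simpa using hlast)
    have hq1' : countP q [l'.getLast hne'] ≤ 1 := countP_le_length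
    rw [countP_append, hq1] at h1
    rw [countP_append] at h2
    have := hperm.countP_eq q
    omega
  · rw [← hsplit, pairwise_append] at hl
    have : l.dropLast.countP q = 0 :=
      countP_eq_zero.2 fun u hu hq => hlast (hl.2.2 u hu _ mem_cons_self (by simpa using hq))
    omega

theorem countP_take_le_countP_take {α : Type*} {q : α → Prop} [DecidablePred q]
    {A B : List α} (hA : A.Pairwise (fun x y => q x → q y)) (hlen : A.length = B.length)
    (hcnt : A.countP q ≤ B.countP q) (j : ℕ) :
    (A.take j).countP q ≤ (B.take j).countP q := by
  by_cases hq : ∃ x ∈ A.take j, q x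
  · obtain ⟨x, hx, hqx⟩ := hq
    rw [← take_append_drop j A, pairwise_append] at hA
    have hdropA : (A.drop j).countP q = A.length - j := by
      rw [← length_drop]
      exact countP_eq_length.2 fun y hy => by simpa using hA.2.2 x hx y hy hqx
    have hdropB : (B.drop j).countP q ≤ B.length - j := length_drop ▸ countP_le_length
    have hA' := congrArg (countP q) (take_append_drop j A)
    have hB' := congrArg (countP q) (take_append_drop j B)
    rw [countP_append] at hA' hB'
    omega
  · push Not at hq
    rw [countP_eq_zero.2 fun x hx => by simpa using hq x hx]
    exact Nat.zero_le _

section PrefixSums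

variable {K : Type*} [Field K] [LinearOrder K] [IsStrictOrderedRing K]

theorem sum_eq_of_forall_eq_or_eq {a b : K} (hab : a ≤ b) :
    ∀ {A : List K}, (∀ x ∈ A, x = a ∨ x = b) →
      A.sum = A.length * a + A.countP (b ≤ ·) * (b - a)
  | [], _ => by simp
  | x :: A, h => by
    have ih := sum_eq_of_forall_eq_or_eq hab fun y hy => h y (mem_cons_of_mem x hy)
    simp only [sum_cons, ih, length_cons, countP_cons, decide_eq_true_eq]
    push_cast
    rcases h x mem_cons_self with rfl | rfl <;> split_ifs with hbx
    · obtain rfl := le_antisymm hab hbx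
      ring
    · ring
    · ring
    · exact absurd le_rfl hbx

theorem le_sum_of_forall_le {a b : K} (hab : a ≤ b) :
    ∀ {B : List K}, (∀ x ∈ B, a ≤ x) →
      B.length * a + B.countP (b ≤ ·) * (b - a) ≤ B.sum
  | [], _ => by simp
  | x :: B, h => by
    have ih := le_sum_of_forall_le hab fun y hy => h y (mem_cons_of_mem x hy)
    have hx := h x mem_cons_self
    simp only [sum_cons, length_cons, countP_cons, decide_eq_true_eq]
    push_cast
    split_ifs with hbx <;> linarith

theorem sum_take_le_sum_take_of_countP_le {a b : K} (hab : a ≤ b) {A B : List K}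
    (hlen : A.length = B.length) (hA : ∀ x ∈ A, x = a ∨ x = b) (hAs : A.Pairwise (· ≤ ·))
    (hB : ∀ x ∈ B, a ≤ x) (hcnt : A.countP (b ≤ ·) ≤ B.countP (b ≤ ·)) (j : ℕ) :
    (A.take j).sum ≤ (B.take j).sum := by
  have hcnt' := countP_take_le_countP_take (hAs.imp fun hxy hbx => hbx.trans hxy) hlen hcnt j
  calc (A.take j).sum
      = (A.take j).length * a + (A.take j).countP (b ≤ ·) * (b - a) :=
        sum_eq_of_forall_eq_or_eq hab fun x hx => hA x (mem_of_mem_take hx)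
    _ ≤ (B.take j).length * a + (B.take j).countP (b ≤ ·) * (b - a) := by
        rw [length_take, length_take, hlen]
        gcongr
    _ ≤ (B.take j).sum := le_sum_of_forall_le hab fun x hx => hB x (mem_of_mem_take hx)

def sumPrefixSums {M : Type*} [AddCommMonoid M] (l : List M) : M :=
  ∑ k ∈ Finset.range (l.length + 1), (l.take k).sum

theorem sumPrefixSums_cons {M : Type*} [AddCommMonoid M] (s : M) (l : List M) :
    sumPrefixSums (s :: l) = (l.length + 1) • s + sumPrefixSums l := by
  rw [sumPrefixSums, length_cons, Finset.sum_range_succ']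
  simp only [take_succ_cons, sum_cons, take_zero, sum_nil, add_zero, Finset.sum_add_distrib,
    Finset.sum_const, Finset.card_range, sumPrefixSums]

theorem sumPrefixSums_le_sumPrefixSums {A B : List K} (hlen : A.length = B.length)
    (h : ∀ j, (A.take j).sum ≤ (B.take j).sum) : sumPrefixSums A ≤ sumPrefixSums B := by
  rw [sumPrefixSums, sumPrefixSums, hlen]
  exact Finset.sum_le_sum fun j _ => h j

variable {α : Type*} {Y : α → α → K} {S : α → K}

theorem sum_map_eq_of_isChain :
    ∀ {x : α} {l : List α}, (x :: l).IsChain (fun u v => S v = S u + Y u v) →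
      ((x :: l).map S).sum = (l.length + 1) * S x + sumPrefixSums (separations Y (x :: l))
  | x, [], _ => by simp [sumPrefixSums]
  | x, y :: l, h => by
    rw [isChain_cons_cons] at h
    rw [map_cons, sum_cons, sum_map_eq_of_isChain h.2, separations_cons_cons,
      sumPrefixSums_cons, length_separations, h.1, nsmul_eq_mul]
    simp only [length_cons, Nat.add_sub_cancel]
    push_cast
    ring

theorem le_sum_map_of_isChain :
    ∀ {x : α} {l : List α}, (x :: l).IsChain (fun u v => Y u v ≤ S v - S u) →
      (l.length + 1) * S x + sumPrefixSums (separations Y (x :: l)) ≤ ((x :: l).map S).sum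
  | x, [], _ => by simp [sumPrefixSums]
  | x, y :: l, h => by
    rw [isChain_cons_cons] at h
    have ih := le_sum_map_of_isChain h.2
    rw [map_cons, sum_cons, separations_cons_cons, sumPrefixSums_cons, length_separations,
      nsmul_eq_mul]
    simp only [length_cons, Nat.add_sub_cancel] at ih ⊢
    push_cast at ih ⊢
    have : (l.length + 1 : K) * Y x y ≤ (l.length + 1) * (S y - S x) := by
      gcongr; exact h.1
    linarith

end PrefixSums

end LandingSequence

namespace LandingAssumptions

open LandingSequence

variable {η : ℕ} {T : ℕ → ℕ → ℝ} {T0 δ : ℝ} (hL : LandingAssumptions η T T0 δ)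
include hL

theorem delta_pos_s6 : 0 < δ := by linarith [hL.T0_pos, hL.delta_lb]

theorem delta_lt_half : δ < 0.5 * T0 := by linarith [hL.T0_pos, hL.delta_ub]

theorem sep_le_sep_of_le {i k j : ℕ} (hi : 1 ≤ i) (hik : i < k) (hkj : k ≤ j) (hj : j ≤ η) :
    T i k ≤ T i j := by
  rcases hkj.eq_or_lt with rfl | hkj
  · rfl
  · exact (hL.mono i k j hi hik hkj hj).1

theorem sep_cases_of_le {i j : ℕ} (hj : 1 ≤ j) (hji : j ≤ i) (hi : i ≤ η) :
    (i ≤ 2 ∧ T i j = 1.5 * T0) ∨ (i = j ∧ (i = 3 ∨ i = 5) ∧ T i j = T0 + δ) ∨ T i j = T0 := by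
  rcases hji.lt_or_eq with hji | rfl
  · by_cases hi2 : i = 2
    · subst hi2
      obtain rfl : j = 1 := by omega
      exact Or.inl ⟨le_rfl, hL.T21⟩
    · exact Or.inr (Or.inr (hL.lower i j hj hji hi hi2))
  · by_cases h12 : j = 1 ∨ j = 2
    · exact Or.inl ⟨by omega, hL.diag12 j h12⟩
    by_cases h35 : j = 3 ∨ j = 5
    · exact Or.inr (Or.inl ⟨rfl, h35, hL.diag35 j h35⟩)
    · exact Or.inr (Or.inr (hL.diag_other j hj hi (by omega) (by omega) (by omega) (by omega)))

theorem add_delta_le_sep_of_lt {i j : ℕ} (hi : 1 ≤ i) (hij : i < j) (hj : j ≤ η) :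
    T0 + δ ≤ T i j := by
  refine le_trans ?_ (hL.sep_le_sep_of_le hi (Nat.lt_succ_self i) hij hj)
  by_cases h5 : i + 1 = 5
  · obtain rfl : i = 4 := by omega
    exact hL.succ45.ge
  · have := hL.succ_other (i + 1) (by omega) (by omega) h5
    simp only [Nat.add_sub_cancel] at this
    linarith [hL.T0_pos, hL.delta_ub]

theorem le_sep_of_le_two {i j : ℕ} (hi : 1 ≤ i) (hi2 : i ≤ 2) (hj : 1 ≤ j) (hjη : j ≤ η) :
    1.5 * T0 ≤ T i j := by
  have := hL.T0_pos
  have := hL.delta_pos_s6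
  obtain rfl | rfl : i = 1 ∨ i = 2 := by omega
  · rcases Nat.lt_or_ge j 2 with hj2 | hj2
    · obtain rfl : j = 1 := by omega
      exact (hL.diag12 1 (Or.inl rfl)).ge
    · linarith [hL.T12, hL.sep_le_sep_of_le le_rfl one_lt_two hj2 hjη]
  · rcases Nat.lt_or_ge j 3 with hj3 | hj3
    · obtain rfl | rfl : j = 1 ∨ j = 2 := by omega
      · exact hL.T21.ge
      · exact (hL.diag12 2 (Or.inr rfl)).ge
    · linarith [hL.T23, hL.sep_le_sep_of_le one_le_two (by norm_num : 2 < 3) hj3 hjη]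

theorem T0_le_sep {i j : ℕ} (hi : 1 ≤ i ∧ i ≤ η) (hj : 1 ≤ j ∧ j ≤ η) : T0 ≤ T i j := by
  have := hL.delta_pos_s6
  rcases Nat.lt_or_ge i j with hij | hji
  · linarith [hL.add_delta_le_sep_of_lt hi.1 hij hj.2]
  · rcases hL.sep_cases_of_le hj.1 hji hi.2 with ⟨-, h⟩ | ⟨-, -, h⟩ | h <;> rw [h] <;>
      linarith [hL.T0_pos]

theorem eq_of_add_delta_le_separations {c : ℕ} (hc : c = 3 ∨ c = 5) :
    ∀ {t : List ℕ}, (c :: t).IsChain (· ≥ ·) → (∀ z ∈ t, 1 ≤ z) →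
      (∀ s ∈ separations T (c :: t), T0 + δ ≤ s) → ∀ z ∈ t, z = c
  | [], _, _, _ => by simp
  | j :: t, hanti, hpos, hsep => by
    rw [isChain_cons_cons] at hanti
    have hjc : j = c := by
      have := hL.delta_pos_s6
      have := hL.eta_ge
      have := hsep _ mem_cons_self
      rcases hL.sep_cases_of_le (hpos j mem_cons_self) hanti.1 (by omega) with
        ⟨h2, -⟩ | ⟨h, -, -⟩ | h
      · omega
      · exact h.symm
      · linarith
    subst hjc
    have ih := eq_of_add_delta_le_separations hc hanti.2 (fun z hz => hpos z (mem_cons_of_mem _ hz))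
      fun s hs => hsep s (mem_cons_of_mem _ hs)
    simpa using ih

theorem eq_of_mem_separations_of_isChain_ge {L : List ℕ} (hrange : ∀ i ∈ L, 1 ≤ i ∧ i ≤ η)
    (hanti : L.IsChain (· ≥ ·)) :
    ∀ s ∈ separations T L, s = T0 ∨ s = T0 + δ ∨ s = 1.5 * T0 := by
  refine forall_mem_separations_iff.2 (hanti.imp_of_mem_imp fun i j hi hj hji => ?_)
  rcases hL.sep_cases_of_le (hrange j hj).1 hji (hrange i hi).2 with ⟨-, h⟩ | ⟨-, -, h⟩ | h <;>
    simp [h]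

theorem separations_cases :
    ∀ {L : List ℕ}, (∀ i ∈ L, 1 ≤ i ∧ i ≤ η) → L.IsChain (· ≥ ·) →
      (separations T L).Pairwise (· ≤ ·) →
      (∀ s ∈ separations T L, s = T0 ∨ s = 1.5 * T0) ∨
      ((∀ s ∈ separations T L, s = T0 ∨ s = T0 + δ) ∧
        ∃ c, (c = 3 ∨ c = 5) ∧ (separations T L).countP (T0 + δ ≤ ·) + 1 ≤ L.count c)
  | [], _, _, _ | [_], _, _, _ => by simp
  | i :: j :: t, hrange, hanti, hsorted => by
    have hd := hL.delta_pos_s6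
    have hT0 := hL.T0_pos
    have hvals := hL.eq_of_mem_separations_of_isChain_ge hrange hanti
    rw [separations_cons_cons, pairwise_cons] at hsorted
    rcases hL.sep_cases_of_le (hrange j (by simp)).1 (isChain_cons_cons.1 hanti).1
      (hrange i mem_cons_self).2 with ⟨-, h⟩ | ⟨rfl, hc, h⟩ | h
    · left
      intro s hs
      rw [separations_cons_cons, mem_cons] at hs
      rcases hs with rfl | hs
      · exact Or.inr h
      · have := hsorted.1 s hs
        rcases hvals s (by simp [hs]) with rfl | rfl | rfl
        · exact Or.inl rfl
        · linarith [hL.delta_lt_half]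
        · exact Or.inr rfl
    · right
      have hall : ∀ z ∈ i :: t, z = i := by
        refine forall_mem_cons.2 ⟨rfl, hL.eq_of_add_delta_le_separations hc
          (isChain_cons_cons.1 hanti).2 (fun z hz => (hrange z (by simp [hz])).1) ?_⟩
        intro s hs
        exact h ▸ hsorted.1 s hs
      have hrep : i :: i :: t = replicate (t.length + 2) i :=
        (eq_replicate_length.2 (forall_mem_cons.2 ⟨rfl, hall⟩)).trans (by simp)
      rw [hrep, separations_replicate, h]
      refine ⟨by simp, i, hc, ?_⟩
      simp [countP_replicate]
    · have ih := separations_cases (fun z hz => hrange z (mem_cons_of_mem i hz))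
        (isChain_cons_cons.1 hanti).2 hsorted.2
      have hnot : ¬ T0 + δ ≤ T i j := by rw [h]; linarith
      rcases ih with ih | ⟨ih, c, hc, hcnt⟩
      · left
        simpa [h] using ih
      · right
        refine ⟨by simpa [h] using ih, c, hc, ?_⟩
        rw [separations_cons_cons, countP_cons, if_neg (by simpa using hnot), count_cons]
        omega

theorem countP_le_countP_separations_of_perm {L L' : List ℕ} (hperm : L ~ L')
    (hrange : ∀ i ∈ L, 1 ≤ i ∧ i ≤ η) (hanti : L.IsChain (· ≥ ·)) :
    (separations T L).countP (1.5 * T0 ≤ ·) ≤ (separations T L').countP (1.5 * T0 ≤ ·) := by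
  have hrange' : ∀ i ∈ L', 1 ≤ i ∧ i ≤ η := fun i hi => hrange i (hperm.mem_iff.2 hi)
  calc (separations T L).countP (1.5 * T0 ≤ ·)
      ≤ L.dropLast.countP (· ≤ 2) := by
        refine countP_separations_le_countP_dropLast _ (hanti.imp_of_mem_imp ?_)
        intro u v hu hv hvu hbig
        rcases hL.sep_cases_of_le (hrange v hv).1 hvu (hrange u hu).2 with
          ⟨h, -⟩ | ⟨-, -, h⟩ | h
        · exact h
        · linarith [hL.delta_lt_half]
        · linarith [hL.T0_pos]
    _ ≤ L'.dropLast.countP (· ≤ 2) :=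
        countP_dropLast_le_of_perm
          ((isChain_iff_pairwise.1 hanti).imp fun hvu hu => le_trans hvu hu) hperm
    _ ≤ (separations T L').countP (1.5 * T0 ≤ ·) := by
        refine countP_dropLast_le_countP_separations _ (pairwise_of_forall_mem_list ?_).isChain
        intro u hu v hv hu2
        exact hL.le_sep_of_le_two (hrange' u hu).1 hu2 (hrange' v hv).1 (hrange' v hv).2

theorem sum_take_separations_le {L L' : List ℕ} (hperm : L ~ L')
    (hrange : ∀ i ∈ L, 1 ≤ i ∧ i ≤ η) (hanti : L.IsChain (· ≥ ·))
    (hsorted : (separations T L).Pairwise (· ≤ ·)) (j : ℕ) :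
    ((separations T L).take j).sum ≤ ((separations T L').take j).sum := by
  have hd := hL.delta_pos_s6
  have hT0 := hL.T0_pos
  have hrange' : ∀ i ∈ L', 1 ≤ i ∧ i ≤ η := fun i hi => hrange i (hperm.mem_iff.2 hi)
  have hlen : (separations T L).length = (separations T L').length := by
    simp [hperm.length_eq]
  have hge : ∀ s ∈ separations T L', T0 ≤ s := forall_mem_separations_iff.2
    (pairwise_of_forall_mem_list fun u hu v hv => hL.T0_le_sep (hrange' u hu) (hrange' v hv)).isChain
  rcases hL.separations_cases hrange hanti hsorted with hvals | ⟨hvals, c, hc, hcnt⟩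
  · exact sum_take_le_sum_take_of_countP_le (by linarith) hlen hvals hsorted hge
      (hL.countP_le_countP_separations_of_perm hperm hrange hanti) j
  · refine sum_take_le_sum_take_of_countP_le (by linarith) hlen hvals hsorted hge ?_ j
    have hcount := count_le_countP_separations_add_one (Y := T) (T0 + δ ≤ ·) c (l := L')
      fun u hu v hv huc hcv => by
        rcases (huc.trans hcv).lt_or_eq with huv | rfl
        · exact hL.add_delta_le_sep_of_lt (hrange' u hu).1 huv (hrange' v hv).2
        · obtain rfl : u = c := le_antisymm huc hcv
          exact (hL.diag35 u hc).ge
    have := hperm.count_eq c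
    omega

end LandingAssumptions

open LandingSequence

theorem totalDelay_eq_sum_sub_sum {S P : ℕ → ℝ} :
    ∀ {l : List ℕ}, (∀ z ∈ l, P z < S z) → totalDelay S P l = (l.map S).sum - (l.map P).sum
  | [], _ => by simp [totalDelay]
  | z :: l, h => by
    have ih := totalDelay_eq_sum_sub_sum fun y hy => h y (mem_cons_of_mem z hy)
    simp only [totalDelay, map_cons, sum_cons] at ih ⊢
    rw [ih, max_eq_left (sub_nonneg.2 (h z mem_cons_self).le)]
    ring

theorem monotone_landing_sequence_is_optimal_general
    (η : ℕ) (T : ℕ → ℕ → ℝ) (T0 δ t0 : ℝ)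
    (hL : LandingAssumptions η T T0 δ)
    (cl : ℕ → ℕ) (P Sa : ℕ → ℝ)
    (Y : ℕ → ℕ → ℝ) (hY : ∀ u v, Y u v = T (cl u) (cl v))
    (Φa : List ℕ) (hne : Φa ≠ [])
    (hclrange : ∀ z ∈ Φa, 1 ≤ cl z ∧ cl z ≤ η)
    (hdecr : Φa.Chain' (fun u v => cl v ≤ cl u))
    (hchaina : Φa.Chain' (fun u v => Sa v = Sa u + Y u v))
    (hfeasa : Φa.Pairwise (fun u v => Y u v ≤ Sa v - Sa u))
    (hwina : ∀ z ∈ Φa, t0 ≤ Sa z)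
    (hstarta : ∀ z, Φa.head? = some z → Sa z = t0)
    (hYmono : ∀ A B u v w, Φa = A ++ [u, v, w] ++ B → Y u v ≤ Y v w)
    (hdelay : ∀ (φ : List ℕ) (S : ℕ → ℝ), φ.Perm Φa →
        φ.Pairwise (fun u v => Y u v ≤ S v - S u) → (∀ z ∈ φ, t0 ≤ S z) →
        ∀ z ∈ φ, P z < S z) :
    ∀ (φ : List ℕ) (S : ℕ → ℝ), φ.Perm Φa →
      φ.Pairwise (fun u v => Y u v ≤ S v - S u) → (∀ z ∈ φ, t0 ≤ S z) →
      totalDelay Sa P Φa ≤ totalDelay S P φ := by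
  intro φ S hperm hfeas hS0
  rw [totalDelay_eq_sum_sub_sum (hdelay Φa Sa (Perm.refl _) hfeasa hwina),
    totalDelay_eq_sum_sub_sum (hdelay φ S hperm hfeas hS0), (hperm.map P).sum_eq]
  have hsorted : (separations Y Φa).Pairwise (· ≤ ·) :=
    isChain_iff_pairwise.1 (isChain_separations hYmono)
  obtain rfl : Y = fun u v => T (cl u) (cl v) := funext₂ hY
  rw [← separations_map] at hsorted
  have hprefix := sumPrefixSums_le_sumPrefixSums (by simp [hperm.length_eq])
    (hL.sum_take_separations_le (hperm.map cl).symm (by simpa using hclrange)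
      ((isChain_map cl).2 hdecr) hsorted)
  rw [separations_map, separations_map] at hprefix
  obtain ⟨x, l, rfl⟩ : ∃ x l, φ = x :: l :=
    exists_cons_of_ne_nil (by rintro rfl; exact hne hperm.symm.eq_nil)
  obtain ⟨xa, la, rfl⟩ := exists_cons_of_ne_nil hne
  have hlen : la.length = l.length := by simpa using hperm.length_eq.symm
  have hstart : (l.length + 1 : ℝ) * t0 ≤ (l.length + 1) * S x :=
    mul_le_mul_of_nonneg_left (hS0 x mem_cons_self) (by positivity)
  rw [sum_map_eq_of_isChain hchaina, hstarta xa rfl, hlen]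
  linarith [le_sum_map_of_isChain hfeas.isChain]

/-- Theorem 4(2) of the paper.  `Φa` is a class-monotonically-decreasing
landing sequence in which each aircraft other than the first is relevant to its leading
aircraft and the first aircraft operates at time `t0`.  If in every ordering of these
aircraft with a feasible schedule every aircraft is delayed (`S z > P z > 0`), and the
separations between consecutive aircraft of `Φa` are nondecreasing along the sequence
(`Y_{k(k+1)} ≤ Y_{(k+1)(k+2)}`), then `(Φa, Sr(Φa))` is an optimal solution of the
total-delay minimization problem: `F(Φa) ≤ F(φ, Sr(φ))` for every ordering `φ` of the same
aircraft with a feasible schedule (`S j − S i ≥ Y i j` for `i` before `j`, and `S ≥ t0`). -/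
theorem monotone_landing_sequence_is_optimal
    (η : ℕ) (T : ℕ → ℕ → ℝ) (T0 δ t0 : ℝ)
    (hL : LandingAssumptions η T T0 δ)
    (cl : ℕ → ℕ) (P Sa : ℕ → ℝ)
    (Y : ℕ → ℕ → ℝ) (hY : ∀ u v, Y u v = T (cl u) (cl v))
    (Φa : List ℕ) (hne : Φa ≠ [])
    (hnodup : Φa.Nodup)
    (hclrange : ∀ z ∈ Φa, 1 ≤ cl z ∧ cl z ≤ η)
    (hdecr : Φa.Chain' (fun u v => cl v ≤ cl u))
    (hchaina : Φa.Chain' (fun u v => Sa v = Sa u + Y u v))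
    (hfeasa : Φa.Pairwise (fun u v => Y u v ≤ Sa v - Sa u))
    (hwina : ∀ z ∈ Φa, t0 ≤ Sa z)
    (hstarta : ∀ z, Φa.head? = some z → Sa z = t0)
    (hYmono : ∀ A B u v w, Φa = A ++ [u, v, w] ++ B → Y u v ≤ Y v w)
    (hPpos : ∀ z ∈ Φa, 0 < P z)
    (hdelay : ∀ (φ : List ℕ) (S : ℕ → ℝ), φ.Perm Φa →
        φ.Pairwise (fun u v => Y u v ≤ S v - S u) → (∀ z ∈ φ, t0 ≤ S z) →
        ∀ z ∈ φ, P z < S z) :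
    ∀ (φ : List ℕ) (S : ℕ → ℝ), φ.Perm Φa →
      φ.Pairwise (fun u v => Y u v ≤ S v - S u) → (∀ z ∈ φ, t0 ≤ S z) →
      totalDelay Sa P Φa ≤ totalDelay S P φ :=
  monotone_landing_sequence_is_optimal_general η T T0 δ t0 hL cl P Sa Y hY Φa hne hclrange hdecr
    hchaina hfeasa hwina hstarta hYmono hdelay
end
end

section
/- Consider a mixed landing and takeoff sequence Φ_a = ⟨φ_{a1}, φ_{a2}⟩ on a same runway or on dual runways, where φ_{a1} = ⟨Tcf_1, …, Tcf_{m_0}⟩ for some integer m_0 > 0 and φ_{a2} = ⟨Tcf_{m_0+1}, …, Tcf_{m_0+m_1}⟩ for some integer m_1 > 0, and exactly m_2 aircraft of φ_{a2} are delayed in Φ_a (i.e., have S exceeding their scheduled time P). Let Φ_b = ⟨φ_{b1}, φ_{a2}⟩ be a sequence of the same group of aircraft, where φ_{b1} is a reordering of the aircraft of φ_{a1}, and at least m_2 aircraft of φ_{a2} are delayed in Φ_b. Suppose that in both Φ_a and Φ_b each aircraft other than the first is relevant to its leading aircraft. If m_2·(S_{m_0+1}(Φ_b) − S_{m_0+1}(Φ_a))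 + F(φ_{b1}, Sr(φ_{b1})) − F(φ_{a1}, Sr(φ_{a1})) > 0, then F(Φ_a) − F(Φ_b) < 0. -/
noncomputable section

open scoped Classical

/-! Once every aircraft of the common suffix `φa2` is relevant to its leader in both sequences,
the two timetables differ on `φa2` by the constant `d = S_{m0+1}(Φb) - S_{m0+1}(Φa)`.
Each of the `m2` aircraft delayed in `Φa` then gains at least `d` of delay in `Φb`, while the
others have delay `0` in `Φa` and delay `≥ 0` in `Φb`, so `F(φa2)` grows by at least `m2 * d`;
together with the change on the prefix this is the positive quantity of the hypothesis. -/

theorem List.IsChain.sub_eq_sub_headI {α G : Type*} [Inhabited α] [AddCommGroup G]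
    {Y : α → α → G} {S T : α → G} :
    ∀ {l : List α}, l.IsChain (fun u v => S v = S u + Y u v) →
      l.IsChain (fun u v => T v = T u + Y u v) → ∀ z ∈ l, T z - S z = T l.headI - S l.headI
  | [], _, _, _, hz => absurd hz List.not_mem_nil
  | [_], _, _, _, hz => by rw [List.mem_singleton.1 hz]; rfl
  | x :: y :: t, hS, hT, z, hz => by
    rw [List.isChain_cons_cons] at hS hT
    rcases List.mem_cons.1 hz with rfl | hz
    · rfl
    · rw [sub_eq_sub_headI hS.2 hT.2 z hz, List.headI, List.headI, hS.1, hT.1]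
      abel

theorem totalDelay_cons (S P : ℕ → ℝ) (x : ℕ) (l : List ℕ) :
    totalDelay S P (x :: l) = max (S x - P x) 0 + totalDelay S P l := by
  simp [totalDelay]

theorem totalDelay_append (S P : ℕ → ℝ) (l₁ l₂ : List ℕ) :
    totalDelay S P (l₁ ++ l₂) = totalDelay S P l₁ + totalDelay S P l₂ := by
  simp [totalDelay]

theorem ite_lt_le_max_add_sub_max (s p d : ℝ) :
    (if p < s then d else 0) ≤ max (s + d - p) 0 - max (s - p) 0 := by
  split_ifs with h
  · rw [max_eq_left (sub_nonneg.2 h.le)]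
    linarith [le_max_left (s + d - p) 0]
  · rw [max_eq_right (sub_nonpos.2 (not_lt.1 h))]
    linarith [le_max_right (s + d - p) 0]

theorem countP_delayed_mul_le_totalDelay_sub (S T P : ℕ → ℝ) (d : ℝ) :
    ∀ l : List ℕ, (∀ z ∈ l, T z = S z + d) →
      (l.countP (fun z => decide (P z < S z)) : ℝ) * d ≤ totalDelay T P l - totalDelay S P l
  | [], _ => by simp [totalDelay]
  | x :: l, hshift => by
    have ih := countP_delayed_mul_le_totalDelay_sub S T P d l
      fun z hz => hshift z (List.mem_cons_of_mem x hz)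
    have hx := ite_lt_le_max_add_sub_max (S x) (P x) d
    rw [← hshift x List.mem_cons_self] at hx
    rw [List.countP_cons, totalDelay_cons, totalDelay_cons]
    simp only [decide_eq_true_eq]
    split_ifs at hx ⊢ <;> push_cast <;> linarith

theorem improving_prefix_reordering_general
    (Y : ℕ → ℕ → ℝ) (P Sa Sb : ℕ → ℝ)
    (φa1 φb1 φa2 : List ℕ)
    (Φa Φb : List ℕ) (hΦa : Φa = φa1 ++ φa2) (hΦb : Φb = φb1 ++ φa2)
    (hchaina : Φa.Chain' (fun u v => Sa v = Sa u + Y u v))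
    (hchainb : Φb.Chain' (fun u v => Sb v = Sb u + Y u v))
    (m2 : ℕ)
    (hm2a : φa2.countP (fun z => decide (P z < Sa z)) = m2)
    (hcond : 0 < (m2 : ℝ) * (Sb φa2.headI - Sa φa2.headI)
        + totalDelay Sb P φb1 - totalDelay Sa P φa1) :
    totalDelay Sa P Φa - totalDelay Sb P Φb < 0 := by
  subst hΦa hΦb
  have hshift : ∀ z ∈ φa2, Sb z = Sa z + (Sb φa2.headI - Sa φa2.headI) := fun z hz =>
    eq_add_of_sub_eq' <| List.IsChain.sub_eq_sub_headI
      (hchaina.suffix (List.suffix_append _ _)) (hchainb.suffix (List.suffix_append _ _)) z hz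
  have hsuffix := countP_delayed_mul_le_totalDelay_sub Sa Sb P _ φa2 hshift
  rw [hm2a] at hsuffix
  rw [totalDelay_append, totalDelay_append]
  linarith

/-- Theorem 6 of the paper.  `Φa = ⟨φa1, φa2⟩` is a mixed landing and
takeoff sequence on a same runway or dual runways in which exactly `m2` aircraft of `φa2`
are delayed, and `Φb = ⟨φb1, φa2⟩` is a sequence of the same group of aircraft (`φb1` a
reordering of `φa1`) in which at least `m2` aircraft of `φa2` are delayed; in both, each
aircraft other than the first is relevant to its leading aircraft.  If
`m2·(S_{m0+1}(Φb) − S_{m0+1}(Φa)) + F(φb1, Sr(φb1)) − F(φa1, Sr(φa1)) > 0`, then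
`F(Φa) − F(Φb) < 0`. -/
theorem improving_prefix_reordering
    (Y : ℕ → ℕ → ℝ) (P Sa Sb : ℕ → ℝ)
    (φa1 φb1 φa2 : List ℕ) (ha1 : φa1 ≠ []) (ha2 : φa2 ≠ [])
    (hperm : φb1.Perm φa1)
    (Φa Φb : List ℕ) (hΦa : Φa = φa1 ++ φa2) (hΦb : Φb = φb1 ++ φa2)
    (hnodup : Φa.Nodup)
    (hchaina : Φa.Chain' (fun u v => Sa v = Sa u + Y u v))
    (hchainb : Φb.Chain' (fun u v => Sb v = Sb u + Y u v))
    (m2 : ℕ)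
    (hm2a : φa2.countP (fun z => decide (P z < Sa z)) = m2)
    (hm2b : m2 ≤ φa2.countP (fun z => decide (P z < Sb z)))
    (hcond : 0 < (m2 : ℝ) * (Sb φa2.headI - Sa φa2.headI)
        + totalDelay Sb P φb1 - totalDelay Sa P φa1) :
    totalDelay Sa P Φa - totalDelay Sb P Φb < 0 :=
  improving_prefix_reordering_general Y P Sa Sb φa1 φb1 φa2 Φa Φb hΦa hΦb hchaina hchainb m2 hm2a
    hcond
end
end
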